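/- Let μ be a probability distribution on the 16 Boolean rules whose support is contained in {φ3, φ6, φ9, φ12}. Then for the random Boolean cellular automaton on ℤ with rule distribution μ, the probability σ_* that a cell stabilizes equals 0; that is, almost surely no cell's trajectory is eventually constant. -/

import Mathlib

open MeasureTheory ProbabilityTheory

/-- A Boolean rule: a function `{0,1} × {0,1} → {0,1}`. -/
abbrev Rule : Type := Bool → Bool → Bool

def phi0 : Rule := fun _ _ => false
def phi2 : Rule := fun x y => !x && y
def phi3 : Rule := fun x _ => !x
def phi4 : Rule := fun x y => x && !y
def phi5 : Rule := fun _ y => !y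
def phi6 : Rule := fun x y => xor x y
def phi9 : Rule := fun x y => !(xor x y)
def phi10 : Rule := fun _ y => y
def phi11 : Rule := fun x y => !(x && !y)
def phi12 : Rule := fun x _ => x
def phi13 : Rule := fun x y => !(!x && y)
def phi15 : Rule := fun _ _ => true

/-- The Bernoulli(1/2) distribution on `Bool`. -/
noncomputable def berHalf : Measure Bool :=
  (2 : ENNReal)⁻¹ • (Measure.dirac true + Measure.dirac false)

/-- The support of a rule distribution: the set of rules of positive probability. -/
def ruleSupport (mu : Measure Rule) : Set Rule := {r | mu {r} ≠ 0}

/-- Evolution of an inhomogeneous cellular automaton on ℤ: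
`x_i(t+1) = φ_i(x_{i-1}(t), x_{i+1}(t))`. -/
def evolveZ (φ : ℤ → Rule) (x0 : ℤ → Bool) : ℕ → ℤ → Bool
  | 0 => x0
  | t+1 => fun i => φ i (evolveZ φ x0 t (i-1)) (evolveZ φ x0 t (i+1))

/-- A trajectory `t ↦ x(t)` stabilizes if it is eventually constant. -/
def Stabilizes (x : ℕ → Bool) : Prop := ∃ T, ∀ t, T ≤ t → x t = x T

/-- The trajectory of cell `i` in the realization where cell `j` has rule `(W j ω).1`
and initial value `(W j ω).2`. -/
def traj (W : ℤ → Ω → Rule × Bool) (ω : Ω) (i : ℤ) : ℕ → Bool :=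
  fun t => evolveZ (fun j => (W j ω).1) (fun j => (W j ω).2) t i

/-! ### Auxiliary material -/

/-- A rule is "left-flipping" if flipping the left input flips the output. -/
def FlipL (r : Rule) : Prop := ∀ x y, r (!x) y = !(r x y)

instance (r : Rule) : Decidable (FlipL r) := by unfold FlipL; infer_instance

lemma flipL_of_mem {r : Rule} (h : r ∈ ({phi3, phi6, phi9, phi12} : Set Rule)) : FlipL r := by
  rcases h with h | h | h | h <;> subst h <;> decide

lemma evolve_local (φ φ' : ℤ → Rule) (x x' : ℤ → Bool) :
    ∀ (t : ℕ) (i : ℤ),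
      (∀ j, i - t < j → j < i + t → φ j = φ' j) →
      (∀ j, i - t ≤ j → j ≤ i + t → x j = x' j) →
      evolveZ φ x t i = evolveZ φ' x' t i := by
  intro t
  induction t with
  | zero =>
    intro i _ hx
    simpa [evolveZ] using hx i (by simp) (by simp)
  | succ t ih =>
    intro i hr hx
    show φ i (evolveZ φ x t (i-1)) (evolveZ φ x t (i+1))
        = φ' i (evolveZ φ' x' t (i-1)) (evolveZ φ' x' t (i+1))
    have h1 : evolveZ φ x t (i-1) = evolveZ φ' x' t (i-1) := by
      apply ih <;> intro j h1 h2 <;> [apply hr; apply hx] <;> push_cast at * <;> omega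
    have h2 : evolveZ φ x t (i+1) = evolveZ φ' x' t (i+1) := by
      apply ih <;> intro j h1 h2 <;> [apply hr; apply hx] <;> push_cast at * <;> omega
    rw [h1, h2, hr i (by push_cast; omega) (by push_cast; omega)]

lemma evolve_flip (φ : ℤ → Rule) (x x' : ℤ → Bool) :
    ∀ (t : ℕ) (i : ℤ),
      (∀ j, i - t < j → j < i + t → FlipL (φ j)) →
      x' (i - t) = !(x (i - t)) →
      (∀ j, j ≠ i - t → x' j = x j) →
      evolveZ φ x' t i = !(evolveZ φ x t i) := by
  intro t
  induction t with
  | zero =>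
    intro i _ h0 _
    simpa [evolveZ] using h0
  | succ t ih =>
    intro i hr h0 h1
    show φ i (evolveZ φ x' t (i-1)) (evolveZ φ x' t (i+1))
        = !(φ i (evolveZ φ x t (i-1)) (evolveZ φ x t (i+1)))
    have e1 : evolveZ φ x' t (i-1) = !(evolveZ φ x t (i-1)) := by
      apply ih
      · intro j hj1 hj2; apply hr <;> push_cast at * <;> omega
      · have : (i-1) - (t:ℤ) = i - (t+1:ℕ) := by push_cast; ring
        rw [this]; exact h0
      · intro j hj; apply h1; intro hc; apply hj; rw [hc]; push_cast; ring
    have e2 : evolveZ φ x' t (i+1) = evolveZ φ x t (i+1) := by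
      apply evolve_local
      · intro j _ _; rfl
      · intro j hj1 hj2; apply h1; push_cast at *; omega
    rw [e1, e2]
    exact hr i (by push_cast; omega) (by push_cast; omega) _ _

/-- Trajectory as a function of the full configuration. -/
def cfgTraj (c : ℤ → Rule × Bool) (i : ℤ) (t : ℕ) : Bool :=
  evolveZ (fun j => (c j).1) (fun j => (c j).2) t i

lemma cfgTraj_local {c c' : ℤ → Rule × Bool} (i : ℤ) (t : ℕ)
    (hr : ∀ j, i - t < j → j < i + t → (c j).1 = (c' j).1)
    (hx : ∀ j, i - t ≤ j → j ≤ i + t → (c j).2 = (c' j).2) :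
    cfgTraj c i t = cfgTraj c' i t :=
  evolve_local _ _ _ _ t i hr hx

/-- Set the initial bit at cell `k` to `false`. -/
def setF (c : ℤ → Rule × Bool) (k : ℤ) : ℤ → Rule × Bool :=
  Function.update c k ((c k).1, false)

lemma cfgTraj_flip (c : ℤ → Rule × Bool) (i : ℤ) (t : ℕ)
    (hflip : ∀ j, i - t < j → j < i + t → FlipL ((c j).1)) :
    cfgTraj c i t = xor ((c (i - t)).2) (cfgTraj (setF c (i - t)) i t) := by
  cases hb : (c (i - (t:ℤ))).2
  · have : setF c (i - t) = c := by
      funext j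
      by_cases hj : j = i - (t:ℤ)
      · subst hj; simp [setF, Function.update_self, ← hb]
      · simp [setF, Function.update_of_ne hj]
    rw [this]; simp
  · have hfst : (fun j => ((setF c (i-(t:ℤ)) j).1 : Rule)) = fun j => (c j).1 := by
      funext j
      by_cases hj : j = i - (t:ℤ)
      · subst hj; simp [setF, Function.update_self]
      · simp [setF, Function.update_of_ne hj]
    have : cfgTraj (setF c (i-t)) i t = !(cfgTraj c i t) := by
      unfold cfgTraj
      rw [hfst]
      apply evolve_flip _ _ _ t i hflip
      · simp [setF, Function.update_self, hb]
      · intro j hj; simp [setF, Function.update_of_ne hj]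
    rw [this]
    simp [hb]

instance : IsProbabilityMeasure berHalf := by
  constructor
  have : (Set.univ : Set Bool) = {true} ∪ {false} := by ext b; cases b <;> simp
  rw [this, measure_union (by simp) (measurableSet_singleton false)]
  simp [berHalf, Measure.dirac_apply]
  rw [ENNReal.inv_two_add_inv_two]

lemma berHalf_single (b : Bool) : berHalf {b} = 2⁻¹ := by
  cases b <;> simp [berHalf, Measure.dirac_apply]

lemma half_step {Ω : Type*} [MeasurableSpace Ω] (P : Measure Ω) [IsProbabilityMeasure P]
    (mu : Measure Rule) [IsProbabilityMeasure mu]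
    (W : ℤ → Ω → Rule × Bool) (hmeas : ∀ i, Measurable (W i))
    (hindep : iIndepFun W P)
    (hlaw : ∀ i, Measure.map (W i) P = mu.prod berHalf)
    (c : ℤ) (S : Finset ℤ) (hcS : c ∉ S)
    (u z : (ℤ → Rule × Bool) → Bool)
    (hu : ∀ c1 c2 : ℤ → Rule × Bool, (∀ j ∈ S, c1 j = c2 j) → u c1 = u c2)
    (hz : ∀ c1 c2 : ℤ → Rule × Bool, (∀ j ∈ S, c1 j = c2 j) → z c1 = z c2) :
    P {ω | u (fun j => W j ω) = true ∧ (W c ω).2 = z (fun j => W j ω)}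
      = 2⁻¹ * P {ω | u (fun j => W j ω) = true} := by
  classical
  set ext0 : (∀ _ : S, Rule × Bool) → (ℤ → Rule × Bool) :=
    fun f j => if h : j ∈ S then f ⟨j, h⟩ else (phi3, false) with hext0
  set R : Ω → ∀ _ : S, Rule × Bool := fun ω j => W j ω with hR
  set Rc : Ω → ∀ _ : ({c} : Finset ℤ), Rule × Bool := fun ω j => W j ω with hRc
  have hdisj : Disjoint ({c} : Finset ℤ) S := Finset.disjoint_singleton_left.mpr hcS
  have indep0 : IndepFun Rc R P := hindep.indepFun_finset {c} S hdisj hmeas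
  set B0 : (∀ _ : ({c} : Finset ℤ), Rule × Bool) → Bool :=
    fun g => (g ⟨c, Finset.mem_singleton_self c⟩).2 with hB0
  set V0 : (∀ _ : S, Rule × Bool) → Bool × Bool :=
    fun f => (u (ext0 f), z (ext0 f)) with hV0
  have indep : IndepFun (B0 ∘ Rc) (V0 ∘ R) P :=
    indep0.comp (measurable_of_countable _) (measurable_of_countable _)
  set f : Ω → Bool := B0 ∘ Rc with hf
  set g : Ω → Bool × Bool := V0 ∘ R with hg
  have hfW : ∀ ω, f ω = (W c ω).2 := fun ω => rfl
  have hextR : ∀ (ω : Ω) (j : ℤ), j ∈ S → ext0 (R ω) j = W j ω := by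
    intro ω j hj; simp [hext0, hR, hj]
  have hgu : ∀ ω, (g ω).1 = u (fun j => W j ω) := by
    intro ω
    exact hu _ _ (fun j hj => hextR ω j hj)
  have hgz : ∀ ω, (g ω).2 = z (fun j => W j ω) := by
    intro ω
    exact hz _ _ (fun j hj => hextR ω j hj)
  have hfm : Measurable f := (measurable_of_countable B0).comp
    (measurable_pi_lambda _ (fun j => hmeas j))
  have hgm : Measurable g := (measurable_of_countable V0).comp
    (measurable_pi_lambda _ (fun j => hmeas j))
  -- law of f
  have hlawf : ∀ b : Bool, P (f ⁻¹' {b}) = 2⁻¹ := by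
    intro b
    have h1 : f = Prod.snd ∘ W c := by funext ω; exact hfW ω
    have h2 : Measure.map f P = berHalf := by
      rw [h1, ← Measure.map_map measurable_snd (hmeas c), hlaw c, Measure.map_snd_prod]
      simp
    have := Measure.map_apply hfm (measurableSet_singleton b) (μ := P)
    rw [h2] at this
    rw [← this, berHalf_single]
  -- decompose the target set
  have hset : {ω | u (fun j => W j ω) = true ∧ (W c ω).2 = z (fun j => W j ω)}
      = (f ⁻¹' {true} ∩ g ⁻¹' {(true, true)}) ∪ (f ⁻¹' {false} ∩ g ⁻¹' {(true, false)}) := by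
    ext ω
    simp only [Set.mem_setOf_eq, Set.mem_union, Set.mem_inter_iff, Set.mem_preimage,
      Set.mem_singleton_iff, ← hgu ω, ← hgz ω, ← hfW ω, Prod.ext_iff]
    rcases g ω with ⟨a, b⟩
    cases a <;> cases b <;> cases h : f ω <;> simp
  have hmul : ∀ (s : Set Bool) (t : Set (Bool × Bool)),
      P (f ⁻¹' s ∩ g ⁻¹' t) = P (f ⁻¹' s) * P (g ⁻¹' t) := by
    intro s t
    exact indep.measure_inter_preimage_eq_mul s t s.to_countable.measurableSet
      t.to_countable.measurableSet
  have hdisj2 : Disjoint (f ⁻¹' {true} ∩ g ⁻¹' {(true, true)})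
      (f ⁻¹' {false} ∩ g ⁻¹' {(true, false)}) := by
    apply Set.disjoint_left.mpr
    rintro ω ⟨h1, _⟩ ⟨h2, _⟩
    simp [Set.mem_preimage] at h1 h2
    rw [h1] at h2; exact Bool.noConfusion h2
  have hmeas2 : MeasurableSet (f ⁻¹' {false} ∩ g ⁻¹' {(true, false)}) :=
    (hfm (measurableSet_singleton _)).inter (hgm (measurableSet_singleton _))
  rw [hset, measure_union hdisj2 hmeas2, hmul, hmul, hlawf, hlawf, ← mul_add]
  congr 1
  have : g ⁻¹' {(true, true)} ∪ g ⁻¹' {(true, false)} = {ω | u (fun j => W j ω) = true} := by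
    ext ω
    simp only [Set.mem_union, Set.mem_preimage, Set.mem_singleton_iff, Set.mem_setOf_eq,
      ← hgu ω, Prod.ext_iff]
    rcases g ω with ⟨a, b⟩
    cases a <;> cases b <;> simp
  rw [← this, measure_union _ (hgm (measurableSet_singleton _))]
  apply Set.disjoint_left.mpr
  rintro ω h1 h2
  simp only [Set.mem_preimage, Set.mem_singleton_iff] at h1 h2
  rw [h1] at h2
  simp at h2

/-- for the RBCA on ℤ with rule distribution μ supported in
`{φ3, φ6, φ9, φ12}`, the probability that a given cell stabilizes is 0 (σ_* = 0);
moreover almost surely no cell's trajectory is eventually constant. -/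
theorem stmt10 (mu : Measure Rule) [IsProbabilityMeasure mu]
    (hsupp : ruleSupport mu ⊆ {phi3, phi6, phi9, phi12})
    {Ω : Type*} [MeasurableSpace Ω] (P : Measure Ω) [IsProbabilityMeasure P]
    (W : ℤ → Ω → Rule × Bool) (hmeas : ∀ i, Measurable (W i))
    (hindep : iIndepFun W P)
    (hlaw : ∀ i, Measure.map (W i) P = mu.prod berHalf) :
    (∀ i : ℤ, P {ω | Stabilizes (traj W ω i)} = 0) ∧
    P {ω | ∃ i : ℤ, Stabilizes (traj W ω i)} = 0 := by
  classical
  set G : Set Ω := {ω | ∀ j : ℤ, FlipL ((W j ω).1)} with hG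
  -- the bad event has probability 0
  have hGc : P Gᶜ = 0 := by
    have hbad : ∀ j : ℤ, P {ω | ¬ FlipL ((W j ω).1)} = 0 := by
      intro j
      set BadR : Set Rule := {r | ¬ FlipL r} with hBadR
      have hmu0 : mu BadR = 0 := by
        have hB : BadR = ⋃ r ∈ BadR, ({r} : Set Rule) := by simp
        rw [hB, measure_biUnion_null_iff (Set.to_countable _)]
        intro r hr
        by_contra h
        exact hr (flipL_of_mem (hsupp h))
      have hpre : {ω | ¬ FlipL ((W j ω).1)} = (W j) ⁻¹' (BadR ×ˢ Set.univ) := by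
        ext ω; simp [hBadR]
      rw [hpre, ← Measure.map_apply (hmeas j)
        ((Set.to_countable (BadR ×ˢ Set.univ)).measurableSet), hlaw j,
        Measure.prod_prod, hmu0, zero_mul]
    have : Gᶜ = ⋃ j : ℤ, {ω | ¬ FlipL ((W j ω).1)} := by
      ext ω; simp [hG]
    rw [this]
    refine le_antisymm ?_ zero_le
    calc P (⋃ j : ℤ, {ω | ¬ FlipL ((W j ω).1)})
        ≤ ∑' j : ℤ, P {ω | ¬ FlipL ((W j ω).1)} := measure_iUnion_le _
      _ = 0 := by simp [hbad]
  have key : ∀ i : ℤ, P {ω | Stabilizes (traj W ω i)} = 0 := by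
    intro i
    have hT : ∀ T : ℕ,
        P ({ω | ∀ t, T ≤ t → traj W ω i t = traj W ω i T} ∩ G) = 0 := by
      intro T
      set D : ℕ → Set Ω := fun n => {ω |
        (∀ k, k < n → traj W ω i (T+k+1) = traj W ω i (T+k)) ∧
        (∀ j ∈ Finset.Ioo (i - ((T+n : ℕ) : ℤ)) (i + ((T+n : ℕ) : ℤ)),
          FlipL ((W j ω).1))} with hD
      have hind : ∀ n : ℕ, P (D n) ≤ 2⁻¹ ^ n := by
        intro n
        induction n with
        | zero =>
          simp only [pow_zero]
          calc P (D 0) ≤ P Set.univ := measure_mono (Set.subset_univ _)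
            _ = 1 := measure_univ
        | succ n ih =>
          set t1 : ℕ := T + n + 1 with ht1
          set c : ℤ := i - (t1 : ℤ) with hc
          set S : Finset ℤ := Finset.Icc (c + 1) (i + (t1 : ℤ)) with hS
          have hcS : c ∉ S := by
            simp only [hS, Finset.mem_Icc]
            omega
          set u : (ℤ → Rule × Bool) → Bool := fun cfg => decide
            ((∀ k, k < n → cfgTraj cfg i (T+k+1) = cfgTraj cfg i (T+k)) ∧
             (∀ j ∈ Finset.Ioo (i - (t1:ℤ)) (i + (t1:ℤ)), FlipL ((cfg j).1))) with hu_def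
          set z : (ℤ → Rule × Bool) → Bool := fun cfg =>
            xor (cfgTraj (setF cfg c) i t1) (cfgTraj cfg i (T+n)) with hz_def
          have hloc : ∀ (c1 c2 : ℤ → Rule × Bool), (∀ j ∈ S, c1 j = c2 j) →
              ∀ t' : ℕ, t' ≤ T + n → cfgTraj c1 i t' = cfgTraj c2 i t' := by
            intro c1 c2 h12 t' ht'
            apply cfgTraj_local
            · intro j h1 h2
              rw [h12 j (by simp only [hS, Finset.mem_Icc]; omega)]
            · intro j h1 h2
              rw [h12 j (by simp only [hS, Finset.mem_Icc]; omega)]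
          have huloc : ∀ c1 c2 : ℤ → Rule × Bool,
              (∀ j ∈ S, c1 j = c2 j) → u c1 = u c2 := by
            intro c1 c2 h12
            have e1 : ∀ k, k < n →
                (cfgTraj c1 i (T+k+1) = cfgTraj c1 i (T+k) ↔
                 cfgTraj c2 i (T+k+1) = cfgTraj c2 i (T+k)) := by
              intro k hk
              rw [hloc c1 c2 h12 (T+k+1) (by omega), hloc c1 c2 h12 (T+k) (by omega)]
            have e2 : ∀ j ∈ Finset.Ioo (i - (t1:ℤ)) (i + (t1:ℤ)),
                (c1 j).1 = (c2 j).1 := by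
              intro j hj
              simp only [Finset.mem_Ioo] at hj
              rw [h12 j (by simp only [hS, Finset.mem_Icc]; omega)]
            simp only [hu_def, decide_eq_decide]
            constructor
            · rintro ⟨a, b⟩
              exact ⟨fun k hk => (e1 k hk).mp (a k hk),
                fun j hj => (e2 j hj) ▸ b j hj⟩
            · rintro ⟨a, b⟩
              exact ⟨fun k hk => (e1 k hk).mpr (a k hk),
                fun j hj => (e2 j hj).symm ▸ b j hj⟩
          have hzloc : ∀ c1 c2 : ℤ → Rule × Bool,
              (∀ j ∈ S, c1 j = c2 j) → z c1 = z c2 := by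
            intro c1 c2 h12
            simp only [hz_def]
            rw [hloc c1 c2 h12 (T+n) le_rfl]
            congr 1
            apply cfgTraj_local
            · intro j h1 h2
              have hjc : j ≠ c := by omega
              simp only [setF, Function.update_of_ne hjc]
              rw [h12 j (by simp only [hS, Finset.mem_Icc]; omega)]
            · intro j h1 h2
              by_cases hjc : j = c
              · subst hjc; simp [setF, Function.update_self]
              · simp only [setF, Function.update_of_ne hjc]
                rw [h12 j (by simp only [hS, Finset.mem_Icc]; omega)]
          have hsub : D (n+1) ⊆
              {ω | u (fun j => W j ω) = true ∧ (W c ω).2 = z (fun j => W j ω)} := by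
            intro ω hω
            obtain ⟨h1, h2⟩ := hω
            have hflip : ∀ j, i - (t1:ℤ) < j → j < i + (t1:ℤ) →
                FlipL ((W j ω).1) := by
              intro j hj1 hj2
              apply h2 j
              simp only [Finset.mem_Ioo]
              push_cast at *
              omega
            constructor
            · simp only [hu_def, decide_eq_true_eq]
              constructor
              · intro k hk
                exact h1 k (by omega)
              · intro j hj
                simp only [Finset.mem_Ioo] at hj
                exact hflip j hj.1 hj.2
            · have hx := cfgTraj_flip (fun j => W j ω) i t1 hflip
              have hA : cfgTraj (fun j => W j ω) i t1
                  = cfgTraj (fun j => W j ω) i (T+n) := by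
                have := h1 n (by omega)
                rw [ht1]
                exact this
              rw [← hc] at hx
              have hxz : xor ((W c ω).2) (cfgTraj (setF (fun j => W j ω) c) i t1)
                  = cfgTraj (fun j => W j ω) i (T+n) := by
                rw [← hx, hA]
              simp only [hz_def]
              rw [← hxz]
              cases (W c ω).2 <;>
                cases (cfgTraj (setF (fun j => W j ω) c) i t1) <;> rfl
          have hstep := half_step P mu W hmeas hindep hlaw c S hcS u z huloc hzloc
          have hDsub : {ω | u (fun j => W j ω) = true} ⊆ D n := by
            intro ω hω
            simp only [Set.mem_setOf_eq, hu_def, decide_eq_true_eq] at hω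
            refine ⟨hω.1, ?_⟩
            intro j hj
            apply hω.2 j
            simp only [Finset.mem_Ioo] at *
            push_cast at *
            omega
          calc P (D (n+1)) ≤ P {ω | u (fun j => W j ω) = true ∧
              (W c ω).2 = z (fun j => W j ω)} := measure_mono hsub
            _ = 2⁻¹ * P {ω | u (fun j => W j ω) = true} := hstep
            _ ≤ 2⁻¹ * P (D n) := mul_le_mul_right (measure_mono hDsub) _
            _ ≤ 2⁻¹ * 2⁻¹ ^ n := mul_le_mul_right ih _
            _ = 2⁻¹ ^ (n+1) := by rw [pow_succ, mul_comm]
      have hsubD : ∀ n : ℕ,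
          {ω | ∀ t, T ≤ t → traj W ω i t = traj W ω i T} ∩ G ⊆ D n := by
        intro n
        rintro ω ⟨hs, hg⟩
        constructor
        · intro k _
          rw [hs (T+k+1) (by omega), hs (T+k) (by omega)]
        · intro j _
          exact hg j
      have hle : ∀ n : ℕ,
          P ({ω | ∀ t, T ≤ t → traj W ω i t = traj W ω i T} ∩ G) ≤ 2⁻¹ ^ n :=
        fun n => le_trans (measure_mono (hsubD n)) (hind n)
      have h0 : Filter.Tendsto (fun n : ℕ => (2⁻¹ : ENNReal) ^ n)
          Filter.atTop (nhds 0) :=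
        ENNReal.tendsto_pow_atTop_nhds_zero_of_lt_one
          (by norm_num : (2⁻¹ : ENNReal) < 1)
      exact le_antisymm (ge_of_tendsto' h0 hle) zero_le
    -- combine
    have hsub2 : {ω | Stabilizes (traj W ω i)} ⊆
        (⋃ T : ℕ, ({ω | ∀ t, T ≤ t → traj W ω i t = traj W ω i T} ∩ G)) ∪ Gᶜ := by
      intro ω hω
      by_cases hg : ω ∈ G
      · obtain ⟨T, hTs⟩ := hω
        exact Or.inl (Set.mem_iUnion.mpr ⟨T, hTs, hg⟩)
      · exact Or.inr hg
    refine le_antisymm ?_ zero_le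
    calc P {ω | Stabilizes (traj W ω i)}
        ≤ P ((⋃ T : ℕ, ({ω | ∀ t, T ≤ t → traj W ω i t = traj W ω i T} ∩ G)) ∪ Gᶜ) :=
          measure_mono hsub2
      _ ≤ P (⋃ T : ℕ, ({ω | ∀ t, T ≤ t → traj W ω i t = traj W ω i T} ∩ G)) + P Gᶜ :=
          measure_union_le _ _
      _ ≤ (∑' T : ℕ, P ({ω | ∀ t, T ≤ t → traj W ω i t = traj W ω i T} ∩ G)) + 0 :=
          add_le_add (measure_iUnion_le _) hGc.le
      _ = 0 := by simp [hT]
  refine ⟨key, ?_⟩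
  have : {ω | ∃ i : ℤ, Stabilizes (traj W ω i)}
      = ⋃ i : ℤ, {ω | Stabilizes (traj W ω i)} := by
    ext ω; simp
  rw [this]
  refine le_antisymm ?_ zero_le
  calc P (⋃ i : ℤ, {ω | Stabilizes (traj W ω i)})
      ≤ ∑' i : ℤ, P {ω | Stabilizes (traj W ω i)} := measure_iUnion_le _
    _ = 0 := by simp [key]
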